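/- Under the hypotheses (2.5): ∑_{ξ,y} |μ̂(ξ)|²|μ̂(yξ)|² μ(y) > Δ ∑_ξ |μ̂(ξ)|², and (2.6): μ(0), ∑_x μ(x)² < Δ/4, with S_1 := {x ∈ F_p : φ(x) > (Δ/8)φ(0)}, one has ∑_{x∈S_1, y∈F_p^×, xy∈S_1} φ(x)φ(xy)μ(y) > (1/2)·Δ·p·φ(0). -/

import Mathlib

open Finset Complex
open scoped Classical BigOperators Pointwise

/-- The additive character `x ↦ e^{2πix/p}` on `ZMod p`. -/
noncomputable def ePsi (p : ℕ) (x : ZMod p) : ℂ :=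
  Complex.exp (2 * Real.pi * Complex.I * (x.val : ℂ) / (p : ℂ))

/-- Fourier transform of a (real) measure on `ZMod p`. -/
noncomputable def ft (p : ℕ) [NeZero p] (μ : ZMod p → ℝ) (ξ : ZMod p) : ℂ :=
  ∑ x : ZMod p, (μ x : ℂ) * ePsi p (x * ξ)

/-- Convolution of two functions on `ZMod p`. -/
noncomputable def cnv (p : ℕ) [NeZero p] (f g : ZMod p → ℝ) (x : ZMod p) : ℝ :=
  ∑ y : ZMod p, f y * g (x - y)

/-- `φ(x) = p · (μ ∗ μ⁻)(x)`. -/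
noncomputable def phiF (p : ℕ) [NeZero p] (μ : ZMod p → ℝ) (x : ZMod p) : ℝ :=
  (p : ℝ) * cnv p μ (fun y => μ (-y)) x

/-- `k`-fold convolution of `f` (0-fold is the Dirac mass at 0). -/
noncomputable def convIter (p : ℕ) [NeZero p] (f : ZMod p → ℝ) : ℕ → ZMod p → ℝ
  | 0 => fun x => if x = 0 then 1 else 0
  | n + 1 => cnv p f (convIter p f n)

/-- `ν_k`, the `k`-fold convolution of `ν = μ ∗ μ⁻`. -/
noncomputable def nuk (p : ℕ) [NeZero p] (μ : ZMod p → ℝ) (k : ℕ) : ZMod p → ℝ :=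
  convIter p (cnv p μ (fun y => μ (-y))) k

/-- `Λ_δ`, the set of large Fourier coefficients. -/
noncomputable def Lam (p : ℕ) [NeZero p] (μ : ZMod p → ℝ) (δ : ℝ) : Finset (ZMod p) :=
  Finset.univ.filter (fun ξ => (p : ℝ) ^ (-δ) < ‖ft p μ ξ‖)

/-! Expanding `φ` in characters gives `φ̂ = |μ̂|²`, so by Plancherel, hypothesis (2.5) says
`∑_{x,y} φ(x) φ(xy) μ(y) > Δ p φ(0)`. This sum exceeds the target sum only by terms with `y = 0`
(total `p φ(0) μ(0) < (Δ/4) p φ(0)`), with `x ∉ S₁, y ≠ 0`, or with `xy ∉ S₁`. In the last two kinds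
one factor `φ` is at most `(Δ/8) φ(0)` while the other sums to `p` (as `x ↦ xy` is a bijection
for `y ≠ 0`), so each kind contributes at most `(Δ/8) p φ(0)`. -/

open ComplexConjugate

section Fourier

variable {p : ℕ} [NeZero p]

lemma ePsi_eq_stdAddChar (x : ZMod p) : ePsi p x = ZMod.stdAddChar x := by
  rw [ZMod.stdAddChar_apply, ZMod.toCircle_apply, ePsi]

lemma ft_eq_sum_stdAddChar (μ : ZMod p → ℝ) (ξ : ZMod p) :
    ft p μ ξ = ∑ x, (μ x : ℂ) * ZMod.stdAddChar (x * ξ) := by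
  simp only [ft, ePsi_eq_stdAddChar]

lemma ft_neg (μ : ZMod p → ℝ) (ξ : ZMod p) : ft p μ (-ξ) = conj (ft p μ ξ) := by
  simp [ft_eq_sum_stdAddChar, AddChar.map_neg_eq_conj]

lemma norm_ft_neg (μ : ZMod p → ℝ) (ξ : ZMod p) : ‖ft p μ (-ξ)‖ = ‖ft p μ ξ‖ := by
  rw [ft_neg, Complex.norm_conj]

lemma sum_sum_mul_stdAddChar_mul {α : Type*} [Fintype α] (f : α → ℂ) (g : α → ZMod p) :
    ∑ ξ : ZMod p, ∑ i, f i * ZMod.stdAddChar (ξ * g i) = p * ∑ i with g i = 0, f i := by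
  rw [sum_comm, sum_filter, mul_sum]
  refine sum_congr rfl fun i _ => ?_
  rw [← mul_sum, AddChar.sum_mulShift _ (ZMod.isPrimitive_stdAddChar p), ZMod.card]
  split_ifs <;> ring

lemma norm_ft_sq_mul_stdAddChar (μ : ZMod p → ℝ) (a ξ : ZMod p) :
    (‖ft p μ ξ‖ : ℂ) ^ 2 * ZMod.stdAddChar (a * ξ)
      = ∑ xy : ZMod p × ZMod p,
          (μ xy.1 * μ xy.2 : ℂ) * ZMod.stdAddChar (ξ * (xy.1 - xy.2 + a)) := by
  rw [← mul_conj', ← ft_neg, ft_eq_sum_stdAddChar, ft_eq_sum_stdAddChar, sum_mul_sum, sum_mul,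
    Fintype.sum_prod_type]
  refine Fintype.sum_congr _ _ fun x => ?_
  rw [sum_mul]
  refine Fintype.sum_congr _ _ fun y => ?_
  rw [show ξ * (x - y + a) = x * ξ + y * -ξ + a * ξ by ring, AddChar.map_add_eq_mul,
    AddChar.map_add_eq_mul]
  ring

lemma ofReal_phiF_eq_sum_norm_ft_sq (μ : ZMod p → ℝ) (a : ZMod p) :
    (phiF p μ a : ℂ) = ∑ ξ, (‖ft p μ ξ‖ : ℂ) ^ 2 * ZMod.stdAddChar (a * ξ) := by
  have hsolve (x y : ZMod p) : x - y + a = 0 ↔ x = y - a := by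
    constructor <;> intro h <;> linear_combination h
  simp only [norm_ft_sq_mul_stdAddChar]
  rw [sum_sum_mul_stdAddChar_mul, sum_filter, Fintype.sum_prod_type, sum_comm]
  simp only [hsolve, sum_ite_eq', mem_univ, if_true, phiF, cnv, neg_sub]
  push_cast
  exact congrArg _ (Fintype.sum_congr _ _ fun y => mul_comm _ _)

lemma sum_norm_ft_sq (μ : ZMod p → ℝ) : ∑ ξ, ‖ft p μ ξ‖ ^ 2 = phiF p μ 0 := by
  have h := ofReal_phiF_eq_sum_norm_ft_sq μ 0
  simp only [zero_mul, AddChar.map_zero_eq_one, mul_one] at h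
  exact_mod_cast h.symm

lemma sum_phiF_mul_phiF_mul (μ : ZMod p → ℝ) (y : ZMod p) :
    ∑ x, phiF p μ x * phiF p μ (x * y) = p * ∑ ξ, ‖ft p μ ξ‖ ^ 2 * ‖ft p μ (y * ξ)‖ ^ 2 := by
  have hsolve (ξ η : ZMod p) : ξ + y * η = 0 ↔ ξ = -(y * η) := by
    constructor <;> intro h <;> linear_combination h
  have hexpand (x : ZMod p) : (phiF p μ x * phiF p μ (x * y) : ℂ)
      = ∑ ξη : ZMod p × ZMod p, ((‖ft p μ ξη.1‖ : ℂ) ^ 2 * (‖ft p μ ξη.2‖ : ℂ) ^ 2)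
          * ZMod.stdAddChar (x * (ξη.1 + y * ξη.2)) := by
    rw [ofReal_phiF_eq_sum_norm_ft_sq, ofReal_phiF_eq_sum_norm_ft_sq, sum_mul_sum,
      Fintype.sum_prod_type]
    refine Fintype.sum_congr _ _ fun ξ => Fintype.sum_congr _ _ fun η => ?_
    rw [show x * (ξ + y * η) = x * ξ + x * y * η by ring, AddChar.map_add_eq_mul]
    ring
  suffices h : (∑ x, phiF p μ x * phiF p μ (x * y) : ℂ)
      = p * ∑ ξ, (‖ft p μ ξ‖ : ℂ) ^ 2 * (‖ft p μ (y * ξ)‖ : ℂ) ^ 2 by exact_mod_cast h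
  simp only [hexpand]
  rw [sum_sum_mul_stdAddChar_mul, sum_filter, Fintype.sum_prod_type, sum_comm]
  simp only [hsolve, sum_ite_eq', mem_univ, if_true, norm_ft_neg]
  exact congrArg _ (Fintype.sum_congr _ _ fun η => mul_comm _ _)

lemma sum_sum_phiF_mul_phiF_mul_mul (μ : ZMod p → ℝ) :
    ∑ x, ∑ y, phiF p μ x * phiF p μ (x * y) * μ y
      = p * ∑ ξ, ∑ y, ‖ft p μ ξ‖ ^ 2 * ‖ft p μ (y * ξ)‖ ^ 2 * μ y := by
  rw [sum_comm]
  simp only [← sum_mul, sum_phiF_mul_phiF_mul, mul_sum]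
  rw [sum_comm]
  refine Fintype.sum_congr _ _ fun y => ?_
  rw [sum_mul]
  exact Fintype.sum_congr _ _ fun ξ => by ring

end Fourier

section Phi

variable {p : ℕ} [NeZero p] {μ : ZMod p → ℝ}

lemma phiF_nonneg (hμ : ∀ x, 0 ≤ μ x) (x : ZMod p) : 0 ≤ phiF p μ x :=
  mul_nonneg (Nat.cast_nonneg p) (sum_nonneg fun y _ => mul_nonneg (hμ y) (hμ _))

lemma sum_phiF (hμ1 : ∑ x, μ x = 1) : ∑ x, phiF p μ x = p := by
  have hshift (y : ZMod p) : ∑ x, μ (y - x) = 1 :=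
    hμ1 ▸ Fintype.sum_equiv (Equiv.subLeft y) _ _ fun x => rfl
  simp only [phiF, cnv, neg_sub, ← mul_sum]
  rw [sum_comm]
  simp only [← mul_sum, hshift, mul_one, hμ1]

end Phi

section Tails

variable {α : Type*} [Fintype α] [DecidableEq α]

lemma sum_sum_le_sum_mem_add_tails [MulZeroClass α] (t : α → α → ℝ) (ht : ∀ x y, 0 ≤ t x y)
    (S : Finset α) :
    ∑ x, ∑ y, t x y ≤ ∑ x ∈ S, ∑ y with y ≠ 0 ∧ x * y ∈ S, t x y
      + ∑ x, t x 0 + ∑ x with x ∉ S, ∑ y with y ≠ 0, t x y + ∑ x, ∑ y with x * y ∉ S, t x y := by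
  have hpoint (x y : α) : t x y ≤ (if x ∈ S then if y ≠ 0 ∧ x * y ∈ S then t x y else 0 else 0)
      + (if y = 0 then t x y else 0) + (if x ∉ S then if y ≠ 0 then t x y else 0 else 0)
      + (if x * y ∉ S then t x y else 0) := by
    have := ht x y
    split_ifs <;> simp_all
  calc ∑ x, ∑ y, t x y ≤ _ := sum_le_sum fun x _ => sum_le_sum fun y _ => hpoint x y
    _ = _ := by
      have hS (g : α → ℝ) : ∑ x, (if x ∈ S then g x else 0) = ∑ x ∈ S, g x := by
        rw [sum_ite_mem, univ_inter]
      simp only [sum_add_distrib, sum_filter, sum_ite_eq', mem_univ, if_true, sum_ite_irrel,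
        sum_const_zero, hS]

variable {f μ : α → ℝ} {S : Finset α} {c : ℝ}

lemma sum_sum_filter_mul_notMem_le [Mul α] (hf : ∀ x, 0 ≤ f x) (hμ : ∀ y, 0 ≤ μ y)
    (hμ1 : ∑ y, μ y = 1) (hc : 0 ≤ c) (hS : ∀ x ∉ S, f x ≤ c) :
    ∑ x, ∑ y with x * y ∉ S, f x * f (x * y) * μ y ≤ c * ∑ x, f x := by
  calc ∑ x, ∑ y with x * y ∉ S, f x * f (x * y) * μ y
      ≤ ∑ x, ∑ y with x * y ∉ S, f x * c * μ y := by
        gcongr with x _ y hy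
        · exact hμ y
        · exact hf x
        · exact hS _ (mem_filter.1 hy).2
    _ ≤ ∑ x, ∑ y, f x * c * μ y := by
        refine sum_le_sum fun x _ => ?_
        exact sum_le_sum_of_subset_of_nonneg (filter_subset _ univ) fun y _ _ =>
          mul_nonneg (mul_nonneg (hf x) hc) (hμ y)
    _ = c * ∑ x, f x := by simp only [← mul_sum, hμ1, ← sum_mul]; ring

lemma sum_filter_notMem_sum_filter_ne_zero_le [GroupWithZero α] (hf : ∀ x, 0 ≤ f x)
    (hμ : ∀ y, 0 ≤ μ y) (hμ1 : ∑ y, μ y = 1) (hc : 0 ≤ c) (hS : ∀ x ∉ S, f x ≤ c) :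
    ∑ x with x ∉ S, ∑ y with y ≠ 0, f x * f (x * y) * μ y ≤ c * ∑ x, f x := by
  calc ∑ x with x ∉ S, ∑ y with y ≠ 0, f x * f (x * y) * μ y
      ≤ ∑ x with x ∉ S, ∑ y with y ≠ 0, c * (f (x * y) * μ y) := by
        refine sum_le_sum fun x hx => sum_le_sum fun y _ => ?_
        rw [mul_assoc]
        exact mul_le_mul_of_nonneg_right (hS x (mem_filter.1 hx).2) (mul_nonneg (hf _) (hμ y))
    _ ≤ ∑ x, ∑ y with y ≠ 0, c * (f (x * y) * μ y) :=
        sum_le_sum_of_subset_of_nonneg (filter_subset _ univ) fun x _ _ =>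
          sum_nonneg fun y _ => mul_nonneg hc (mul_nonneg (hf _) (hμ y))
    _ = c * ∑ y with y ≠ 0, (∑ x, f (x * y)) * μ y := by
        rw [sum_comm, mul_sum]
        simp only [mul_sum, sum_mul]
    _ = c * ((∑ x, f x) * ∑ y with y ≠ 0, μ y) := by
        congr 1
        rw [mul_sum]
        refine sum_congr rfl fun y hy => ?_
        rw [Fintype.sum_equiv (Equiv.mulRight₀ y (mem_filter.1 hy).2) (fun x => f (x * y)) f
          fun x => rfl]
    _ ≤ c * ((∑ x, f x) * 1) := by
        gcongr
        · exact sum_nonneg fun x _ => hf x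
        · exact hμ1 ▸ sum_le_sum_of_subset_of_nonneg (filter_subset _ univ) fun y _ _ => hμ y
    _ = c * ∑ x, f x := by rw [mul_one]

end Tails

theorem stmt3_general (p : ℕ) [Fact p.Prime] (μ : ZMod p → ℝ)
    (hpos : ∀ x, 0 ≤ μ x) (hsum : ∑ x : ZMod p, μ x = 1)
    (Δ : ℝ) (hΔ0 : 0 < Δ)
    (h25 : ∑ ξ : ZMod p, ∑ y : ZMod p,
        ‖ft p μ ξ‖ ^ 2 * ‖ft p μ (y * ξ)‖ ^ 2 * μ y
      > Δ * ∑ ξ : ZMod p, ‖ft p μ ξ‖ ^ 2)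
    (h26a : μ 0 < Δ / 4)
    (S1 : Finset (ZMod p))
    (hS1 : S1 = Finset.univ.filter (fun x => Δ / 8 * phiF p μ 0 < phiF p μ x)) :
    ∑ x ∈ S1, ∑ y ∈ Finset.univ.filter (fun y : ZMod p => y ≠ 0 ∧ x * y ∈ S1),
        phiF p μ x * phiF p μ (x * y) * μ y
      > 1 / 2 * Δ * p * phiF p μ 0 := by
  have hp : (0 : ℝ) < p := Nat.cast_pos.2 (Fact.out : p.Prime).pos
  have hφ := phiF_nonneg hpos
  have hφ1 : ∑ x, phiF p μ x = p := sum_phiF hsum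
  have hc : 0 ≤ Δ / 8 * phiF p μ 0 := mul_nonneg (by positivity) (hφ 0)
  have hsmall : ∀ x ∉ S1, phiF p μ x ≤ Δ / 8 * phiF p μ 0 := by simp [hS1]
  have htotal : Δ * p * phiF p μ 0 < ∑ x, ∑ y, phiF p μ x * phiF p μ (x * y) * μ y := by
    rw [sum_sum_phiF_mul_phiF_mul_mul, ← sum_norm_ft_sq]
    linarith [mul_lt_mul_of_pos_left h25 hp]
  have hzero : ∑ x, phiF p μ x * phiF p μ (x * 0) * μ 0 = p * phiF p μ 0 * μ 0 := by
    simp only [mul_zero, ← sum_mul, hφ1]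
  have hsplit := sum_sum_le_sum_mem_add_tails (fun x y => phiF p μ x * phiF p μ (x * y) * μ y)
    (fun x y => mul_nonneg (mul_nonneg (hφ x) (hφ _)) (hpos y)) S1
  have hleft := sum_filter_notMem_sum_filter_ne_zero_le hφ hpos hsum hc hsmall
  have hright := sum_sum_filter_mul_notMem_le hφ hpos hsum hc hsmall
  rw [hφ1] at hleft hright
  linarith [mul_le_mul_of_nonneg_left h26a.le (mul_nonneg hp.le (hφ 0))]

theorem stmt3 (p : ℕ) [Fact p.Prime] (μ : ZMod p → ℝ)
    (hpos : ∀ x, 0 ≤ μ x) (hsum : ∑ x : ZMod p, μ x = 1)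
    (Δ : ℝ) (hΔ0 : 0 < Δ) (hΔ1 : Δ ≤ 1 / 2)
    (h25 : ∑ ξ : ZMod p, ∑ y : ZMod p,
        ‖ft p μ ξ‖ ^ 2 * ‖ft p μ (y * ξ)‖ ^ 2 * μ y
      > Δ * ∑ ξ : ZMod p, ‖ft p μ ξ‖ ^ 2)
    (h26a : μ 0 < Δ / 4) (h26b : ∑ x : ZMod p, (μ x) ^ 2 < Δ / 4)
    (S1 : Finset (ZMod p))
    (hS1 : S1 = Finset.univ.filter (fun x => Δ / 8 * phiF p μ 0 < phiF p μ x)) :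
    ∑ x ∈ S1, ∑ y ∈ Finset.univ.filter (fun y : ZMod p => y ≠ 0 ∧ x * y ∈ S1),
        phiF p μ x * phiF p μ (x * y) * μ y
      > 1 / 2 * Δ * p * phiF p μ 0 :=
  stmt3_general p μ hpos hsum Δ hΔ0 h25 h26a S1 hS1
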